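/- In the out-of-distribution setting with shared covariate covariance Σ_x (Σ_x^{(i)} = Σ_x^{(o)} = Σ_x), let f^pre(x) = W^pre x be the pre-trained predictor, B^(o) the OOD regression matrix, and let the S²FT population solution replace W^pre by W^pre + C U_S Vᵀ W_low with C U_S Vᵀ W_low Σ^{1/2} = Π (B^(i) − W^pre) Σ^{1/2}, where Π = Φ''_S Φ''_Sᵀ is the orthogonal projection onto the column space of C U_S and B^(i) Σ^{1/2} lies in the column space reachable through the network. If ‖Π (B^(o) − B^(i)) Σ^{1/2}‖_F² ≤ ε² E^(o)(f^pre), where E^(o)(f^pre) = ‖(B^(o) − W^pre) Σ^{1/2}‖_F², then the OOD excess risk of the S²FT model satisfies E^(o)(f_SFT) ≤ (1 + 3ε²) E^(o)(f^pre). -/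

import Mathlib

open Matrix

/-- Frobenius norm of a real matrix. -/
noncomputable def frobNorm {m n : Type*} [Fintype m] [Fintype n]
    (M : Matrix m n ℝ) : ℝ :=
  Real.sqrt (∑ i, ∑ j, (M i j) ^ 2)

/-- The positive semidefinite square root of a positive semidefinite matrix
(the definition of `Matrix.PosSemidef.sqrt` in the older Mathlib). -/
noncomputable def Matrix.PosSemidef.sqrt {n : Type*} [Fintype n] [DecidableEq n]
    {A : Matrix n n ℝ} (hA : A.PosSemidef) : Matrix n n ℝ :=
  hA.1.eigenvectorUnitary.1 * diagonal ((√·) ∘ hA.1.eigenvalues) *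
  (star hA.1.eigenvectorUnitary : Matrix n n ℝ)

/-!
With `A = (B^(o) − W^pre) Σ^{1/2}` and `D = (B^(o) − B^(i)) Σ^{1/2}`, the OOD error of the
fine-tuned model is `(1 − Π) A + Π D`. The two summands are orthogonal in the Frobenius inner
product, so its squared norm is `‖(1 − Π) A‖² + ‖Π D‖² ≤ ‖A‖² + ε² ‖A‖²`.
-/

lemma transpose_one_sub_mul_mul_proj_eq_zero {m n : Type*} [Fintype m] [DecidableEq m]
    {P : Matrix m m ℝ} (hPsymm : P.IsSymm) (hPidem : IsIdempotentElem P) (X Y : Matrix m n ℝ) :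
    ((1 - P) * X)ᵀ * (P * Y) = 0 := by
  have hcompl : (1 - P) * P = 0 := by rw [Matrix.sub_mul, Matrix.one_mul, hPidem.eq, sub_self]
  rw [transpose_mul, transpose_sub, transpose_one, hPsymm.eq, Matrix.mul_assoc,
    ← Matrix.mul_assoc (1 - P), hcompl, Matrix.zero_mul, Matrix.mul_zero]

section Frobenius

variable {m n : Type*} [Fintype m] [Fintype n]

lemma frobNorm_sq_eq_trace (X : Matrix m n ℝ) : frobNorm X ^ 2 = trace (Xᵀ * X) := by
  rw [frobNorm, Real.sq_sqrt (by positivity), trace]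
  simp only [diag_apply, mul_apply, transpose_apply]
  rw [Finset.sum_comm]
  simp only [pow_two]

lemma frobNorm_add_sq_of_transpose_mul_eq_zero {X Y : Matrix m n ℝ} (h : Xᵀ * Y = 0) :
    frobNorm (X + Y) ^ 2 = frobNorm X ^ 2 + frobNorm Y ^ 2 := by
  have h' : Yᵀ * X = 0 := by simpa [transpose_mul] using congrArg transpose h
  simp only [frobNorm_sq_eq_trace, transpose_add, Matrix.add_mul, Matrix.mul_add, h, h',
    trace_add, add_zero, zero_add]

variable [DecidableEq m] {P : Matrix m m ℝ}

lemma frobNorm_one_sub_mul_add_proj_mul_sq (hPsymm : P.IsSymm) (hPidem : IsIdempotentElem P)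
    (X Y : Matrix m n ℝ) :
    frobNorm ((1 - P) * X + P * Y) ^ 2 = frobNorm ((1 - P) * X) ^ 2 + frobNorm (P * Y) ^ 2 :=
  frobNorm_add_sq_of_transpose_mul_eq_zero
    (transpose_one_sub_mul_mul_proj_eq_zero hPsymm hPidem X Y)

lemma frobNorm_one_sub_mul_sq_le (hPsymm : P.IsSymm) (hPidem : IsIdempotentElem P)
    (X : Matrix m n ℝ) : frobNorm ((1 - P) * X) ^ 2 ≤ frobNorm X ^ 2 :=
  calc frobNorm ((1 - P) * X) ^ 2
      ≤ frobNorm ((1 - P) * X) ^ 2 + frobNorm (P * X) ^ 2 := le_add_of_nonneg_right (sq_nonneg _)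
    _ = frobNorm ((1 - P) * X + P * X) ^ 2 :=
        (frobNorm_one_sub_mul_add_proj_mul_sq hPsymm hPidem X X).symm
    _ = frobNorm X ^ 2 := by rw [Matrix.sub_mul, Matrix.one_mul, sub_add_cancel]

end Frobenius

theorem s2ft_ood_bound_general (q p : ℕ)
    (Sx : Matrix (Fin p) (Fin p) ℝ) (hS : Sx.PosSemidef)
    (Wpre Bi Bo M : Matrix (Fin q) (Fin p) ℝ)
    (Proj : Matrix (Fin q) (Fin q) ℝ) (hPsym : Projᵀ = Proj) (hPidem : Proj * Proj = Proj)
    (hM : M * hS.sqrt = Wpre * hS.sqrt + Proj * ((Bi - Wpre) * hS.sqrt))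
    (ε : ℝ)
    (hshift : frobNorm (Proj * ((Bo - Bi) * hS.sqrt)) ^ 2
        ≤ ε ^ 2 * frobNorm ((Bo - Wpre) * hS.sqrt) ^ 2) :
    frobNorm ((Bo - M) * hS.sqrt) ^ 2
      ≤ (1 + 3 * ε ^ 2) * frobNorm ((Bo - Wpre) * hS.sqrt) ^ 2 := by
  set A := (Bo - Wpre) * hS.sqrt
  set D := (Bo - Bi) * hS.sqrt
  have herror : (Bo - M) * hS.sqrt = (1 - Proj) * A + Proj * D := by
    rw [Matrix.sub_mul, hM]
    simp only [A, D, Matrix.sub_mul, Matrix.mul_sub, Matrix.one_mul]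
    abel
  calc frobNorm ((Bo - M) * hS.sqrt) ^ 2
      = frobNorm ((1 - Proj) * A) ^ 2 + frobNorm (Proj * D) ^ 2 := by
        rw [herror, frobNorm_one_sub_mul_add_proj_mul_sq hPsym hPidem]
    _ ≤ frobNorm A ^ 2 + ε ^ 2 * frobNorm A ^ 2 :=
        add_le_add (frobNorm_one_sub_mul_sq_le hPsym hPidem A) hshift
    _ ≤ (1 + 3 * ε ^ 2) * frobNorm A ^ 2 := by nlinarith [sq_nonneg ε, sq_nonneg (frobNorm A)]

/-- OOD risk bound for S²FT: if the fine-tuned predictor is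
`M = W^pre + Proj (B^(i) − W^pre)` (on the covariance square root), with `Proj` an orthogonal
projection, and the label shift visible through `Proj` is bounded by `ε²` times the OOD
excess risk of the pre-trained model, then
`E^(o)(f_SFT) ≤ (1 + 3ε²) E^(o)(f^pre)`, where `E^(o)(f) = ‖(B^(o) − M) Σ_x^{1/2}‖_F²`. -/
theorem s2ft_ood_bound (q p : ℕ)
    (Sx : Matrix (Fin p) (Fin p) ℝ) (hS : Sx.PosSemidef)
    (Wpre Bi Bo M : Matrix (Fin q) (Fin p) ℝ)
    (Proj : Matrix (Fin q) (Fin q) ℝ) (hPsym : Projᵀ = Proj) (hPidem : Proj * Proj = Proj)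
    (hM : M * hS.sqrt = Wpre * hS.sqrt + Proj * ((Bi - Wpre) * hS.sqrt))
    (ε : ℝ) (hε : 0 ≤ ε)
    (hshift : frobNorm (Proj * ((Bo - Bi) * hS.sqrt)) ^ 2
        ≤ ε ^ 2 * frobNorm ((Bo - Wpre) * hS.sqrt) ^ 2) :
    frobNorm ((Bo - M) * hS.sqrt) ^ 2
      ≤ (1 + 3 * ε ^ 2) * frobNorm ((Bo - Wpre) * hS.sqrt) ^ 2 :=
  s2ft_ood_bound_general q p Sx hS Wpre Bi Bo M Proj hPsym hPidem hM ε hshift
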